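/- For every real number x > 0, the limit as n → ∞ of 2(n−1)·x · ∫₁^∞ ((n(r−1)+1)/r^(n+2)) · exp(−((n(r−1)+1)/rⁿ)·x²) dr equals 2(1 − e^(−x²))/x + 2x · ∫₀¹ exp(−(s − s·log s)·x²) ds. (This is Theorem 1.2 of the paper: the expected density 𝔻_{|pₙ|}(x) = 2πx·𝔻_{pₙ}(x) of nonvanishing critical values of |pₙ|.) -/

import Mathlib

/-!
The substitution `r = s ^ (-p)` with `p = 1 / (n - 1)` turns `(n - 1) ∫₁^∞ … dr` into an
integral over `(0, 1)` whose integrand depends continuously on `p > 0`. As `p → 0⁺` it tends to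
`(1 - log s) e^{-(s - s log s) x²}`, since `(s⁻¹ ^ p - 1) / p → log s⁻¹`, and it is dominated by
`1 - 2 log s`, so dominated convergence applies. In the limit, the `-log s` part is an exact
derivative because `(s - s log s)' = -log s`, which produces the term `(1 - e^{-x²}) / x²`.
-/

open MeasureTheory Real Filter Set Topology

theorem integral_Ioi_one_eq_integral_Ioo_rpow_neg {E : Type*} [NormedAddCommGroup E]
    [NormedSpace ℝ E] {p : ℝ} (hp : 0 < p) (g : ℝ → E) :
    ∫ r in Ioi 1, g r = p • ∫ s in Ioo 0 1, s ^ (-p - 1) • g (s ^ (-p)) := by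
  have hneg : -p < 0 := neg_neg_iff_pos.mpr hp
  have himage : (fun s : ℝ => s ^ (-p)) '' Ioo 0 1 = Ioi 1 := by
    refine Subset.antisymm ?_ fun r (hr : 1 < r) => ?_
    · rintro _ ⟨s, hs, rfl⟩
      exact one_lt_rpow_of_pos_of_lt_one_of_neg hs.1 hs.2 hneg
    · have hr0 : 0 < r := one_pos.trans hr
      refine ⟨r ^ (-p)⁻¹, ⟨rpow_pos_of_pos hr0 _, ?_⟩, rpow_inv_rpow hr0.le hneg.ne⟩
      exact rpow_lt_one_of_one_lt_of_neg hr (inv_lt_zero.mpr hneg)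
  have hinj : InjOn (fun s : ℝ => s ^ (-p)) (Ioo 0 1) :=
    (strictAntiOn_rpow_Ioi_of_exponent_neg hneg).injOn.mono Ioo_subset_Ioi_self
  have hderiv : ∀ s ∈ Ioo (0 : ℝ) 1,
      HasDerivWithinAt (fun s : ℝ => s ^ (-p)) (-p * s ^ (-p - 1)) (Ioo 0 1) s :=
    fun s hs => (hasDerivAt_rpow_const (Or.inl hs.1.ne')).hasDerivWithinAt
  rw [← himage, integral_image_eq_integral_abs_deriv_smul measurableSet_Ioo hderiv hinj,
    ← integral_smul]
  refine setIntegral_congr_fun measurableSet_Ioo fun s hs => ?_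
  rw [abs_mul, abs_neg, abs_of_pos hp, abs_of_pos (rpow_pos_of_pos hs.1 _), mul_smul]

/-- `n (r - 1) + 1` at `r = s ^ (-p)`, written with `n = 1 + p⁻¹` so that `p → 0⁺` plays the role
of `n → ∞`. -/
noncomputable def radialFactor (p s : ℝ) : ℝ := (1 + p) * (p⁻¹ * (s⁻¹ ^ p - 1)) + 1

noncomputable def rescaledIntegrand (x p s : ℝ) : ℝ :=
  radialFactor p s * s ^ (2 * p) * exp (-(radialFactor p s * s ^ (1 + p)) * x ^ 2)

theorem rpow_neg_sub_one_mul_eq_rescaledIntegrand (x : ℝ) {n : ℕ} (hn : n ≠ 1) {s : ℝ}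
    (hs : 0 < s) :
    s ^ (-((n : ℝ) - 1)⁻¹ - 1) *
        (((n : ℝ) * (s ^ (-((n : ℝ) - 1)⁻¹) - 1) + 1) / (s ^ (-((n : ℝ) - 1)⁻¹)) ^ (n + 2) *
          exp (-(((n : ℝ) * (s ^ (-((n : ℝ) - 1)⁻¹) - 1) + 1) / (s ^ (-((n : ℝ) - 1)⁻¹)) ^ n)
            * x ^ 2))
      = rescaledIntegrand x ((n : ℝ) - 1)⁻¹ s := by
  set p := ((n : ℝ) - 1)⁻¹ with hp
  have hp0 : p ≠ 0 := inv_ne_zero (sub_ne_zero.mpr (by exact_mod_cast hn))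
  have hnp : (n : ℝ) = 1 + p⁻¹ := by rw [hp, inv_inv]; ring
  obtain ⟨L, rfl⟩ : ∃ L, s = exp L := ⟨log s, (exp_log hs).symm⟩
  have hfactor : (n : ℝ) * (exp L ^ (-p) - 1) + 1 = radialFactor p (exp L) := by
    rw [radialFactor, ← exp_neg, ← exp_mul, ← exp_mul, hnp]
    field_simp
    ring
  simp only [rescaledIntegrand, ← hfactor, ← exp_mul, ← exp_nat_mul, div_eq_mul_inv, ← exp_neg]
  have hpow : L * (-p - 1) + -(↑(n + 2) * (L * -p)) = L * (2 * p) := by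
    push_cast; rw [hnp]; field_simp; ring
  have hpow' : -(↑n * (L * -p)) = L * (1 + p) := by rw [hnp]; field_simp; ring
  rw [hpow', ← hpow, exp_add]
  ring

theorem integral_Ioi_one_eq_inv_mul_integral_rescaledIntegrand (x : ℝ) {n : ℕ} (hn : 1 < n) :
    ∫ r in Ioi (1 : ℝ), (((n : ℝ) * (r - 1) + 1) / r ^ (n + 2)) *
        exp (-(((n : ℝ) * (r - 1) + 1) / r ^ n) * x ^ 2)
      = ((n : ℝ) - 1)⁻¹ * ∫ s in Ioo 0 1, rescaledIntegrand x ((n : ℝ) - 1)⁻¹ s := by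
  have hp : 0 < ((n : ℝ) - 1)⁻¹ := inv_pos.mpr (sub_pos.mpr (by exact_mod_cast hn))
  rw [integral_Ioi_one_eq_integral_Ioo_rpow_neg hp, smul_eq_mul]
  congr 1
  exact setIntegral_congr_fun measurableSet_Ioo fun s hs =>
    rpow_neg_sub_one_mul_eq_rescaledIntegrand x hn.ne' hs.1

theorem one_le_radialFactor {p s : ℝ} (hp : 0 < p) (hs₀ : 0 < s) (hs₁ : s ≤ 1) :
    1 ≤ radialFactor p s := by
  have : 1 ≤ s⁻¹ ^ p := one_le_rpow (one_le_inv₀ hs₀ |>.mpr hs₁) hp.le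
  unfold radialFactor
  have : 0 ≤ p⁻¹ * (s⁻¹ ^ p - 1) := mul_nonneg (inv_nonneg.mpr hp.le) (by linarith)
  nlinarith

theorem radialFactor_mul_rpow_le {p s : ℝ} (hp : 0 < p) (hs : 0 < s) :
    radialFactor p s * s ^ p ≤ (1 + p) * -log s + s ^ p := by
  have hsp : 0 < s ^ p := rpow_pos_of_pos hs p
  have hlog : p * log s ≤ s ^ p - 1 := by
    rw [← log_rpow hs]; exact log_le_sub_one_of_pos hsp
  have hexpand : radialFactor p s * s ^ p = (1 + p) * (p⁻¹ * (1 - s ^ p)) + s ^ p := by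
    rw [radialFactor, inv_rpow hs.le]
    field_simp
  rw [hexpand]
  gcongr
  rw [inv_mul_le_iff₀ hp]
  linarith

theorem rescaledIntegrand_nonneg (x : ℝ) {p s : ℝ} (hp : 0 < p) (hs₀ : 0 < s) (hs₁ : s ≤ 1) :
    0 ≤ rescaledIntegrand x p s := by
  have := one_le_radialFactor hp hs₀ hs₁
  unfold rescaledIntegrand
  positivity

theorem rescaledIntegrand_le (x : ℝ) {p s : ℝ} (hp₀ : 0 < p) (hp₁ : p ≤ 1) (hs₀ : 0 < s)
    (hs₁ : s ≤ 1) : rescaledIntegrand x p s ≤ 1 - 2 * log s := by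
  have hA : 0 ≤ radialFactor p s := zero_le_one.trans (one_le_radialFactor hp₀ hs₀ hs₁)
  have hexp : exp (-(radialFactor p s * s ^ (1 + p)) * x ^ 2) ≤ 1 := by
    rw [exp_le_one_iff, neg_mul]
    exact neg_nonpos.mpr (by positivity)
  have hpow : s ^ (2 * p) ≤ s ^ p := rpow_le_rpow_of_exponent_ge hs₀ hs₁ (by linarith)
  have hlog : 0 ≤ -log s := neg_nonneg.mpr (log_nonpos hs₀.le hs₁)
  calc rescaledIntegrand x p s ≤ radialFactor p s * s ^ (2 * p) := by
        unfold rescaledIntegrand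
        exact mul_le_of_le_one_right (by positivity) hexp
    _ ≤ radialFactor p s * s ^ p := by gcongr
    _ ≤ (1 + p) * -log s + s ^ p := radialFactor_mul_rpow_le hp₀ hs₀
    _ ≤ 2 * -log s + 1 := by
        gcongr
        · linarith
        · exact rpow_le_one hs₀.le hs₁ hp₀.le
    _ = 1 - 2 * log s := by ring

theorem tendsto_radialFactor {s : ℝ} (hs : 0 < s) :
    Tendsto (fun p => radialFactor p s) (𝓝[>] 0) (𝓝 (1 - log s)) := by
  have hsum : Tendsto (fun p : ℝ => 1 + p) (𝓝[>] 0) (𝓝 1) := by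
    simpa using ((continuous_const_add (1 : ℝ)).tendsto 0).mono_left nhdsWithin_le_nhds
  have h := (hsum.mul (tendsto_rpow_sub_one_log (inv_pos.mpr hs))).add_const 1
  rwa [log_inv, one_mul, neg_add_eq_sub] at h

theorem tendsto_rescaledIntegrand (x : ℝ) {s : ℝ} (hs : 0 < s) :
    Tendsto (fun p => rescaledIntegrand x p s) (𝓝[>] 0)
      (𝓝 ((1 - log s) * exp (-(s - s * log s) * x ^ 2))) := by
  have hpow : ∀ a b : ℝ, Tendsto (fun p => s ^ (a + b * p)) (𝓝[>] 0) (𝓝 (s ^ a)) := fun a b => by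
    have hc : Continuous fun p : ℝ => s ^ (a + b * p) :=
      (continuous_const_rpow hs.ne').comp (by fun_prop)
    simpa using (hc.tendsto 0).mono_left nhdsWithin_le_nhds
  have hA := tendsto_radialFactor hs
  have h := (hA.mul (by simpa using hpow 0 2)).mul
    (((hA.mul (by simpa using hpow 1 1)).neg).mul_const (x ^ 2)).rexp
  convert h using 2
  · rfl
  · ring_nf

theorem measurable_rescaledIntegrand (x p : ℝ) : Measurable (rescaledIntegrand x p) := by
  unfold rescaledIntegrand radialFactor
  fun_prop

theorem tendsto_integral_rescaledIntegrand (x : ℝ) :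
    Tendsto (fun p => ∫ s in Ioo 0 1, rescaledIntegrand x p s) (𝓝[>] 0)
      (𝓝 (∫ s in Ioo 0 1, (1 - log s) * exp (-(s - s * log s) * x ^ 2))) := by
  refine tendsto_integral_filter_of_dominated_convergence (fun s => 1 - 2 * log s)
    (.of_forall fun p => (measurable_rescaledIntegrand x p).aestronglyMeasurable) ?_ ?_ ?_
  · filter_upwards [Ioc_mem_nhdsGT zero_lt_one] with p hp
    refine (ae_restrict_iff' measurableSet_Ioo).mpr (.of_forall fun s hs => ?_)
    rw [norm_of_nonneg (rescaledIntegrand_nonneg x hp.1 hs.1 hs.2.le)]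
    exact rescaledIntegrand_le x hp.1 hp.2 hs.1 hs.2.le
  · have h : IntervalIntegrable (fun s => 1 - 2 * log s) volume 0 1 :=
      intervalIntegrable_const.sub (intervalIntegral.intervalIntegrable_log'.const_mul 2)
    exact (intervalIntegrable_iff_integrableOn_Ioo_of_le zero_le_one).mp h
  · exact (ae_restrict_iff' measurableSet_Ioo).mpr
      (.of_forall fun s hs => tendsto_rescaledIntegrand x hs.1)

theorem integral_one_sub_log_mul_exp {x : ℝ} (hx : x ≠ 0) :
    ∫ s in Ioo 0 1, (1 - log s) * exp (-(s - s * log s) * x ^ 2)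
      = (1 - exp (-x ^ 2)) / x ^ 2 + ∫ s in (0 : ℝ)..1, exp (-(s - s * log s) * x ^ 2) := by
  set E : ℝ → ℝ := fun s => exp (-(s - s * log s) * x ^ 2) with hE
  have hEcont : Continuous E := by fun_prop
  have hEint : IntervalIntegrable E volume 0 1 := hEcont.intervalIntegrable 0 1
  have hlogEint : IntervalIntegrable (fun s => log s * E s) volume 0 1 :=
    intervalIntegral.intervalIntegrable_log'.mul_continuousOn hEcont.continuousOn
  have hderiv : ∀ s ∈ Ioo (0 : ℝ) 1, HasDerivAt (fun s => E s / x ^ 2) (log s * E s) s := by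
    intro s hs
    have hw : HasDerivAt (fun s => -(s - s * log s) * x ^ 2) (log s * x ^ 2) s :=
      (((hasDerivAt_id' s).sub (hasDerivAt_mul_log hs.1.ne')).neg.mul_const (x ^ 2)).congr_deriv
        (by ring)
    exact (hw.exp.div_const (x ^ 2)).congr_deriv (by simp only [hE]; field_simp)
  have hftc : ∫ s in (0 : ℝ)..1, log s * E s = (exp (-x ^ 2) - 1) / x ^ 2 := by
    rw [intervalIntegral.integral_eq_sub_of_hasDerivAt_of_le zero_le_one
      (hEcont.div_const _).continuousOn hderiv hlogEint]
    simp only [hE, log_one, log_zero, mul_zero, sub_zero, sub_self, neg_zero, zero_mul, exp_zero,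
      neg_mul, one_mul]
    ring
  rw [← integral_Ioc_eq_integral_Ioo, ← intervalIntegral.integral_of_le zero_le_one]
  simp only [sub_mul, one_mul]
  rw [intervalIntegral.integral_sub hEint hlogEint, hftc]
  ring

/-- Theorem 1.2: for every `x > 0`, the expected density
`𝔻_{|pₙ|}(x) = 2πx·𝔻_{pₙ}(x) = 2(n−1)x ∫₁^∞ ((n(r−1)+1)/r^(n+2)) e^{−((n(r−1)+1)/rⁿ) x²} dr`
of nonvanishing critical values of `|pₙ|` converges, as `n → ∞`, to
`2(1 − e^{−x²})/x + 2x ∫₀¹ e^{−(s − s log s) x²} ds`. -/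
theorem su2_modulus_critical_values_density_limit (x : ℝ) (hx : 0 < x) :
    Tendsto
      (fun n : ℕ =>
        2 * ((n : ℝ) - 1) * x *
          ∫ r in Ioi (1 : ℝ),
            (((n : ℝ) * (r - 1) + 1) / r ^ (n + 2)) *
              Real.exp (-(((n : ℝ) * (r - 1) + 1) / r ^ n) * x ^ 2))
      atTop
      (nhds (2 * (1 - Real.exp (-x ^ 2)) / x
        + 2 * x * ∫ s in (0:ℝ)..1, Real.exp (-(s - s * Real.log s) * x ^ 2))) := by
  have hp : Tendsto (fun n : ℕ => ((n : ℝ) - 1)⁻¹) atTop (𝓝[>] 0) :=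
    tendsto_inv_atTop_nhdsGT_zero.comp
      (tendsto_atTop_add_const_right _ (-1) tendsto_natCast_atTop_atTop)
  have h := ((tendsto_integral_rescaledIntegrand x).comp hp).const_mul (2 * x)
  rw [integral_one_sub_log_mul_exp hx.ne'] at h
  convert h.congr' ?_ using 2
  · field_simp
  · filter_upwards [eventually_gt_atTop 1] with n hn
    have hn' : (n : ℝ) - 1 ≠ 0 := sub_ne_zero.mpr (by exact_mod_cast hn.ne')
    rw [Function.comp_apply, integral_Ioi_one_eq_inv_mul_integral_rescaledIntegrand x hn]
    field_simp
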